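/- arXiv:1502.00445 — 6 statements merged into one kernel-verified Lean document; each statement's English description precedes it below -/
import Mathlib

section
/- Let ε > 0 and let G be a bipartite graph with parts A₀, A₁ each of size n. Suppose (1) every vertex of G has degree at least εn, and (2) for every X₀ ⊆ A₀ and X₁ ⊆ A₁ with |X₀| = |X₁| = ⌈εn⌉, there is at least one edge between X₀ and X₁. Then G contains a perfect matching. -/
/-!
Hall's condition holds with `k = ⌈εn⌉`. A set `S ⊆ A₀` with `|S| ≤ k` is matched by the
neighbourhood of any one of its vertices. If `|A₀ \ S| < k`, every vertex of `A₁`, having at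
least `k` neighbours, has one in `S`. Otherwise `|S| ≥ k` and `|A₀ \ S| ≥ k`; then fewer than
`k` vertices of `A₁` lie outside `N(S)`, since `k` of them together with `k` vertices of `S`
would span no edge, so `|N(S)| > n - k ≥ |S|`.
-/

open Finset

section Hall

variable {α β : Type*} [Fintype β] (E : α → β → Prop) [DecidableRel E]

theorem card_le_card_nbhd_of_card_le_degree {k : ℕ} (hdeg : ∀ a, k ≤ #{b | E a b})
    {s : Finset α} (hs : #s ≤ k) : #s ≤ #{b | ∃ a ∈ s, E a b} := by
  obtain rfl | ⟨a, ha⟩ := s.eq_empty_or_nonempty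
  · simp
  calc #s ≤ #{b | E a b} := hs.trans (hdeg a)
    _ ≤ #{b | ∃ a ∈ s, E a b} := card_le_card fun b hb ↦ by
      simp only [mem_filter, mem_univ, true_and] at hb ⊢
      exact ⟨a, ha, hb⟩

theorem nbhd_eq_univ_of_card_compl_lt_degree [Fintype α] [DecidableEq α] {k : ℕ}
    (hdeg : ∀ b, k ≤ #{a | E a b}) {s : Finset α} (hs : #sᶜ < k) :
    ({b | ∃ a ∈ s, E a b} : Finset β) = univ := by
  refine eq_univ_of_forall fun b ↦ ?_
  have hnot : ¬ ({a | E a b} : Finset α) ⊆ sᶜ := fun h ↦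
    (hs.trans_le (hdeg b)).not_ge (card_le_card h)
  obtain ⟨a, hab, has⟩ := not_subset.mp hnot
  simp only [mem_filter, mem_univ, true_and, mem_compl, not_not] at hab has ⊢
  exact ⟨a, has, hab⟩

theorem card_compl_nbhd_lt_of_forall_exists_edge [DecidableEq β] {k : ℕ}
    (hcross : ∀ (X₀ : Finset α) (X₁ : Finset β), #X₀ = k → #X₁ = k → ∃ a ∈ X₀, ∃ b ∈ X₁, E a b)
    {s : Finset α} (hs : k ≤ #s) : #({b | ∃ a ∈ s, E a b} : Finset β)ᶜ < k := by
  by_contra! hcompl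
  obtain ⟨X₀, hX₀s, hX₀⟩ := exists_subset_card_eq hs
  obtain ⟨X₁, hX₁, hX₁k⟩ := exists_subset_card_eq hcompl
  obtain ⟨a, ha, b, hb, hab⟩ := hcross X₀ X₁ hX₀ hX₁k
  have hbN := hX₁ hb
  simp only [mem_compl, mem_filter, mem_univ, true_and, not_exists, not_and] at hbN
  exact hbN a (hX₀s ha) hab

theorem hall_condition_of_degree_of_forall_exists_edge [Fintype α] [DecidableEq α] [DecidableEq β]
    (hcard : Fintype.card α = Fintype.card β)
    {k : ℕ} (hdegA : ∀ a, k ≤ #{b | E a b}) (hdegB : ∀ b, k ≤ #{a | E a b})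
    (hcross : ∀ (X₀ : Finset α) (X₁ : Finset β), #X₀ = k → #X₁ = k → ∃ a ∈ X₀, ∃ b ∈ X₁, E a b)
    (s : Finset α) : #s ≤ #{b | ∃ a ∈ s, E a b} := by
  rcases le_or_gt #s k with hsmall | hlarge
  · exact card_le_card_nbhd_of_card_le_degree E hdegA hsmall
  rcases lt_or_ge #sᶜ k with hco | hco
  · rw [nbhd_eq_univ_of_card_compl_lt_degree E hdegB hco, card_univ, ← hcard]
    exact card_le_univ s
  have hN := card_compl_nbhd_lt_of_forall_exists_edge E hcross hlarge.le
  rw [card_compl] at hN hco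
  have := card_le_univ ({b | ∃ a ∈ s, E a b} : Finset β)
  omega

theorem exists_equiv_of_hall_condition [Fintype α] (hcard : Fintype.card α = Fintype.card β)
    (hall : ∀ s : Finset α, #s ≤ #{b | ∃ a ∈ s, E a b}) : ∃ f : α ≃ β, ∀ a, E a (f a) := by
  obtain ⟨f, hinj, hf⟩ := (Fintype.all_card_le_filter_rel_iff_exists_injective E).mp hall
  exact ⟨.ofBijective f ((Fintype.bijective_iff_injective_and_card f).mpr ⟨hinj, hcard⟩), hf⟩

end Hall

open scoped Classical

theorem bipartite_perfect_matching_of_degree_and_expansion_general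
    {α β : Type*} [Fintype α] [Fintype β]
    (n : ℕ) (hcardα : Fintype.card α = n) (hcardβ : Fintype.card β = n)
    (E : α → β → Prop) [∀ a b, Decidable (E a b)] (ε : ℝ)
    (hdegA : ∀ a : α, ε * n ≤ (((Finset.univ : Finset β).filter fun b => E a b).card : ℝ))
    (hdegB : ∀ b : β, ε * n ≤ (((Finset.univ : Finset α).filter fun a => E a b).card : ℝ))
    (hcross : ∀ X₀ : Finset α, ∀ X₁ : Finset β,
      X₀.card = ⌈ε * n⌉₊ → X₁.card = ⌈ε * n⌉₊ → ∃ a ∈ X₀, ∃ b ∈ X₁, E a b) :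
    ∃ f : α ≃ β, ∀ a : α, E a (f a) := by
  have hcard : Fintype.card α = Fintype.card β := hcardα.trans hcardβ.symm
  exact exists_equiv_of_hall_condition E hcard <|
    hall_condition_of_degree_of_forall_exists_edge E hcard
      (fun a ↦ Nat.ceil_le.mpr (hdegA a)) (fun b ↦ Nat.ceil_le.mpr (hdegB b)) hcross

theorem bipartite_perfect_matching_of_degree_and_expansion
    {α β : Type*} [Fintype α] [Fintype β] [DecidableEq α] [DecidableEq β]
    (n : ℕ) (hn : 0 < n) (hcardα : Fintype.card α = n) (hcardβ : Fintype.card β = n)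
    (E : α → β → Prop) [∀ a b, Decidable (E a b)] (ε : ℝ) (hε : 0 < ε)
    (hdegA : ∀ a : α, ε * n ≤ (((Finset.univ : Finset β).filter fun b => E a b).card : ℝ))
    (hdegB : ∀ b : β, ε * n ≤ (((Finset.univ : Finset α).filter fun a => E a b).card : ℝ))
    (hcross : ∀ X₀ : Finset α, ∀ X₁ : Finset β,
      X₀.card = ⌈ε * n⌉₊ → X₁.card = ⌈ε * n⌉₊ → ∃ a ∈ X₀, ∃ b ∈ X₁, E a b) :
    ∃ f : α ≃ β, ∀ a : α, E a (f a) :=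
  bipartite_perfect_matching_of_degree_and_expansion_general n hcardα hcardβ E ε hdegA hdegB hcross
end

section
/- For every positive integer k, if G = (V, E) is an (R, c)-expander with c ≥ k and R·c ≥ (|V| + k)/2, then G is k-vertex-connected. -/
/-- The external neighborhood of a vertex set `U` in a graph `G`. -/
def extNbhd {V : Type*} [Fintype V] [DecidableEq V] (G : SimpleGraph V) [DecidableRel G.Adj]
    (U : Finset V) : Finset V :=
  Finset.univ.filter fun v => v ∉ U ∧ ∃ u ∈ U, G.Adj u v

/-- `G` is k-vertex-connected: more than `k` vertices and deleting any set of fewer than `k`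
vertices leaves a connected graph. -/
def IsKVertexConnected {V : Type*} [Fintype V] [DecidableEq V] (G : SimpleGraph V)
    (k : ℕ) : Prop :=
  k < Fintype.card V ∧
    ∀ s : Finset V, s.card < k → (G.induce ((↑(sᶜ) : Set V))).Connected

/-!
Let `s` be a set of fewer than `k` vertices and `A` the smaller side of a split of `G - s` with
no edges across, so that `N(A) ⊆ s` and `2|A| + |N(A)| ≤ |V|`. If `|A| ≤ R`, expansion gives
`|N(A)| ≥ c|A| ≥ k`. Otherwise a subset `A' ⊆ A` of size `R` has `N(A') ⊆ (A \ A') ∪ N(A)`, so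
`cR ≤ |A| - R + |N(A)| ≤ (|V| + |N(A)|)/2 - R`, and `Rc ≥ (|V| + k)/2` again forces `|N(A)| ≥ k`.
Either way `|s| ≥ k`, a contradiction.
-/

open Finset

namespace SimpleGraph

variable {V : Type*} [Fintype V] [DecidableEq V] (G : SimpleGraph V) [DecidableRel G.Adj]

def IsExpander (R : ℕ) (c : ℝ) : Prop :=
  ∀ U : Finset V, U.card ≤ R → c * U.card ≤ ((extNbhd G U).card : ℝ)

lemma mem_extNbhd {U : Finset V} {v : V} : v ∈ extNbhd G U ↔ v ∉ U ∧ ∃ u ∈ U, G.Adj u v := by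
  simp [extNbhd]

lemma card_extNbhd_add_card_le (U : Finset V) :
    (extNbhd G U).card + U.card ≤ Fintype.card V := by
  rw [← card_union_of_disjoint]
  · exact card_le_univ _
  · exact Finset.disjoint_left.mpr fun v hv => ((mem_extNbhd G).mp hv).1

lemma extNbhd_subset_sdiff_union {U W : Finset V} (hUW : U ⊆ W) :
    extNbhd G U ⊆ (W \ U) ∪ extNbhd G W := by
  intro v hv
  obtain ⟨hvU, u, hu, huv⟩ := (mem_extNbhd G).mp hv
  by_cases hvW : v ∈ W
  · exact mem_union_left _ (mem_sdiff.mpr ⟨hvW, hvU⟩)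
  · exact mem_union_right _ ((mem_extNbhd G).mpr ⟨hvW, u, hUW hu, huv⟩)

lemma card_extNbhd_add_card_le_of_subset {U W : Finset V} (hUW : U ⊆ W) :
    (extNbhd G U).card + U.card ≤ (extNbhd G W).card + W.card := by
  have := card_le_card (extNbhd_subset_sdiff_union G hUW)
  have := card_union_le (W \ U) (extNbhd G W)
  have := card_sdiff_add_card_eq_card hUW
  omega

lemma extNbhd_compl_sdiff_subset {s A : Finset V} (hA : extNbhd G A ⊆ s) :
    extNbhd G (sᶜ \ A) ⊆ s := by
  intro v hv
  obtain ⟨hvB, b, hb, hbv⟩ := (mem_extNbhd G).mp hv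
  obtain ⟨hbs, hbA⟩ := mem_sdiff.mp hb
  by_contra hvs
  have hvA : v ∈ A := by simpa [hvs] using hvB
  exact mem_compl.mp hbs (hA ((mem_extNbhd G).mpr ⟨hbA, v, hvA, hbv.symm⟩))

/-- The vertices reachable from `x` in `G - s` form a side of a split with no edges across. -/
lemma exists_extNbhd_subset_of_not_preconnected {s : Finset V}
    (h : ¬ (G.induce (↑sᶜ : Set V)).Preconnected) :
    ∃ A ⊆ sᶜ, A.Nonempty ∧ (sᶜ \ A).Nonempty ∧ extNbhd G A ⊆ s := by
  obtain ⟨x, y, hxy⟩ : ∃ x y, ¬ (G.induce (↑sᶜ : Set V)).Reachable x y := by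
    simpa [Preconnected] using h
  let A : Finset V := univ.filter fun v =>
    ∃ hv : v ∈ (↑sᶜ : Set V), (G.induce (↑sᶜ : Set V)).Reachable x ⟨v, hv⟩
  have mem_A {v : V} : v ∈ A ↔ ∃ hv : v ∈ (↑sᶜ : Set V),
      (G.induce (↑sᶜ : Set V)).Reachable x ⟨v, hv⟩ := by simp [A]
  refine ⟨A, fun v hv => by exact_mod_cast (mem_A.mp hv).1, ⟨x, mem_A.mpr ⟨x.2, .rfl⟩⟩,
    ⟨y, mem_sdiff.mpr ⟨by exact_mod_cast y.2, fun hy => hxy (mem_A.mp hy).2⟩⟩, ?_⟩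
  intro v hv
  obtain ⟨hvA, u, hu, huv⟩ := (mem_extNbhd G).mp hv
  by_contra hvs
  have hv' : v ∈ (↑sᶜ : Set V) := by simpa using hvs
  exact hvA (mem_A.mpr ⟨hv', (mem_A.mp hu).2.trans (Adj.reachable (G := G.induce _) huv)⟩)

variable {G} {R k : ℕ} {c : ℝ}

theorem IsExpander.lt_card [Nonempty V] (hG : G.IsExpander R c) (hkc : (k : ℝ) ≤ c)
    (hRc : ((Fintype.card V : ℝ) + k) / 2 ≤ R * c) : k < Fintype.card V := by
  obtain ⟨v⟩ := ‹Nonempty V›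
  have hR : 1 ≤ R := by
    rcases Nat.eq_zero_or_pos R with rfl | hR
    · have : (0 : ℝ) < Fintype.card V := by exact_mod_cast Fintype.card_pos
      simp only [Nat.cast_zero, zero_mul] at hRc
      linarith [(k.cast_nonneg : (0 : ℝ) ≤ k)]
    · exact hR
  have hexp := hG {v} (by simpa using hR)
  have hcard := card_extNbhd_add_card_le G {v}
  rw [card_singleton] at hexp hcard
  have : (k : ℝ) + 1 ≤ Fintype.card V := by
    push_cast at hexp
    linarith [(by exact_mod_cast hcard : ((extNbhd G {v}).card : ℝ) + 1 ≤ Fintype.card V)]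
  exact_mod_cast this

theorem IsExpander.le_card_extNbhd (hG : G.IsExpander R c) (hkc : (k : ℝ) ≤ c)
    (hRc : ((Fintype.card V : ℝ) + k) / 2 ≤ R * c) {A : Finset V} (hA : A.Nonempty)
    (hsmall : 2 * A.card + (extNbhd G A).card ≤ Fintype.card V) : k ≤ (extNbhd G A).card := by
  have hc : 0 ≤ c := le_trans k.cast_nonneg hkc
  suffices (k : ℝ) ≤ (extNbhd G A).card by exact_mod_cast this
  rcases le_or_gt A.card R with hAR | hRA
  · have hA1 : (1 : ℝ) ≤ A.card := by exact_mod_cast hA.card_pos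
    calc (k : ℝ) ≤ c := hkc
      _ ≤ c * A.card := le_mul_of_one_le_right hc hA1
      _ ≤ (extNbhd G A).card := hG A hAR
  · obtain ⟨A', hA'A, hA'⟩ := exists_subset_card_eq hRA.le
    have hexp := hG A' hA'.le
    have hcard : ((extNbhd G A').card : ℝ) + R ≤ (extNbhd G A).card + A.card := by
      exact_mod_cast hA' ▸ card_extNbhd_add_card_le_of_subset G hA'A
    have hsmall' : 2 * (A.card : ℝ) + (extNbhd G A).card ≤ Fintype.card V := by
      exact_mod_cast hsmall
    rw [hA'] at hexp
    linarith [(R.cast_nonneg : (0 : ℝ) ≤ R)]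

theorem IsExpander.induce_compl_preconnected (hG : G.IsExpander R c) (hkc : (k : ℝ) ≤ c)
    (hRc : ((Fintype.card V : ℝ) + k) / 2 ≤ R * c) {s : Finset V} (hs : s.card < k) :
    (G.induce (↑sᶜ : Set V)).Preconnected := by
  by_contra hcon
  obtain ⟨A, hAs, hA, hB, hAsep⟩ := exists_extNbhd_subset_of_not_preconnected G hcon
  have hBsep := extNbhd_compl_sdiff_subset G hAsep
  have hsplit : (sᶜ \ A).card + A.card + s.card = Fintype.card V := by
    rw [card_sdiff_add_card_eq_card hAs, card_compl, Nat.sub_add_cancel (card_le_univ s)]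
  have hA' := card_le_card hAsep
  have hB' := card_le_card hBsep
  rcases le_total A.card (sᶜ \ A).card with hle | hle
  · have := hG.le_card_extNbhd hkc hRc hA (by omega)
    omega
  · have := hG.le_card_extNbhd hkc hRc hB (by omega)
    omega

end SimpleGraph

theorem expander_is_k_connected_general
    {V : Type*} [Fintype V] [DecidableEq V] [Nonempty V]
    (G : SimpleGraph V) [DecidableRel G.Adj]
    (k R : ℕ) (c : ℝ) (hc : (k : ℝ) ≤ c)
    (hexp : ∀ U : Finset V, U.card ≤ R → c * U.card ≤ ((extNbhd G U).card : ℝ))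
    (hRc : ((Fintype.card V : ℝ) + k) / 2 ≤ R * c) :
    IsKVertexConnected G k := by
  have hG : G.IsExpander R c := hexp
  have hkV := hG.lt_card hc hRc
  refine ⟨hkV, fun s hs => ?_⟩
  obtain ⟨v, hv⟩ : (sᶜ : Finset V).Nonempty := by
    rw [← card_pos, card_compl]
    omega
  have : Nonempty (↑sᶜ : Set V) := ⟨⟨v, by exact_mod_cast hv⟩⟩
  exact ⟨hG.induce_compl_preconnected hc hRc hs⟩

theorem expander_is_k_connected
    {V : Type*} [Fintype V] [DecidableEq V] [Nonempty V]
    (G : SimpleGraph V) [DecidableRel G.Adj]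
    (k R : ℕ) (c : ℝ) (hk : 0 < k) (hc : (k : ℝ) ≤ c)
    (hexp : ∀ U : Finset V, U.card ≤ R → c * U.card ≤ ((extNbhd G U).card : ℝ))
    (hRc : ((Fintype.card V : ℝ) + k) / 2 ≤ R * c) :
    IsKVertexConnected G k :=
  expander_is_k_connected_general G k R c hc hexp hRc
end

section
/- Consider a graph on n vertices constructed as follows: partition n - r vertices (where r < k - 1) into k - 1 sets V₁, …, V_{k-1} each of size ⌊n/(k-1)⌋ ≥ k, place a Hamilton cycle on each Vᵢ, place a perfect matching between Vᵢ and Vⱼ for every 1 ≤ i < j ≤ k-1, and join each of the remaining r vertices to k distinct vertices of V₁ ∪ … ∪ V_{k-1}. Then the resulting graph is k-vertex-connected. -/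
open SimpleGraph Finset Function

namespace SimpleGraph

variable {V : Type*} {G : SimpleGraph V} {S : Set V}

theorem Walk.reachable_induce {a b : V} (p : G.Walk a b) (hp : ∀ w ∈ p.support, w ∈ S) :
    (G.induce S).Reachable ⟨a, hp a p.start_mem_support⟩ ⟨b, hp b p.end_mem_support⟩ :=
  (p.connected_induce_support ⟨a, p.start_mem_support⟩ ⟨b, p.end_mem_support⟩).map
    (induceHomOfLE G hp).toHom

theorem Walk.IsPath.reachable_induce [DecidableEq V] {u x y z : V} {q : G.Walk u x}
    (hq : q.IsPath) (hS : ∀ w ∈ q.support, w ≠ x → w ∈ S) (hy : y ∈ q.support)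
    (hz : z ∈ q.support) (hyx : y ≠ x) (hzx : z ≠ x) :
    (G.induce S).Reachable ⟨y, hS y hy hyx⟩ ⟨z, hS z hz hzx⟩ := by
  have avoid : ∀ w (hw : w ∈ q.support), w ≠ x → ∀ v ∈ (q.takeUntil w hw).support, v ∈ S :=
    fun w hw hwx v hv => hS v (q.support_takeUntil_subset_support hw hv)
      (fun hvx => Walk.endpoint_notMem_support_takeUntil hq hw hwx.symm (hvx ▸ hv))
  exact ((q.takeUntil y hy).reachable_induce (avoid y hy hyx)).symm.trans
    ((q.takeUntil z hz).reachable_induce (avoid z hz hzx))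

theorem Walk.IsCycle.reachable_induce [DecidableEq V] {v y z : V} {c : G.Walk v v}
    (hc : c.IsCycle) (hS : {x | x ∈ c.support ∧ x ∉ S}.Subsingleton) (hy : y ∈ c.support)
    (hz : z ∈ c.support) (hyS : y ∈ S) (hzS : z ∈ S) :
    (G.induce S).Reachable ⟨y, hyS⟩ ⟨z, hzS⟩ := by
  by_cases hdel : ∃ x ∈ c.support, x ∉ S
  · obtain ⟨x, hx, hxS⟩ := hdel
    -- rotated to start at `x`, the cycle minus its first edge is a path ending at `x`
    have hc' := hc.rotate hx
    have hmem : ∀ w, w ∈ c.support ↔ w = x ∨ w ∈ (c.rotate x hx).tail.support := fun w => by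
      rw [← c.mem_support_rotate_iff x hx, ← cons_support_tail hc'.not_nil, List.mem_cons]
    have htail : ∀ w, w ∈ c.support → w ∈ S → w ∈ (c.rotate x hx).tail.support := fun w hw hwS =>
      ((hmem w).mp hw).resolve_left (by rintro rfl; exact hxS hwS)
    exact hc'.isPath_tail.reachable_induce
      (fun w hw hwx => by_contra fun hwS => hwx (hS ⟨(hmem w).mpr (Or.inr hw), hwS⟩ ⟨hx, hxS⟩))
      (htail y hy hyS) (htail z hz hzS) (by rintro rfl; exact hxS hyS)
      (by rintro rfl; exact hxS hzS)
  · push Not at hdel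
    exact c.connected_induce_support ⟨y, hy⟩ ⟨z, hz⟩ |>.map
      (induceHomOfLE G hdel).toHom

end SimpleGraph

theorem exists_and_of_subsingleton_setOf_not {α : Type*} [Finite α] {p q : α → Prop}
    (hα : 2 < Nat.card α) (hp : {x | ¬ p x}.Subsingleton) (hq : {x | ¬ q x}.Subsingleton) :
    ∃ x, p x ∧ q x := by
  by_contra! h
  have hcover : Set.univ ⊆ {x | ¬ p x} ∪ {x | ¬ q x} := fun x _ =>
    (em (p x)).elim (fun hx => .inr (h x hx)) .inl
  have hle := (Set.ncard_le_ncard hcover).trans (Set.ncard_union_le _ _)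
  rw [Set.ncard_univ] at hle
  have hp1 := Set.ncard_le_one_iff_subsingleton.mpr hp
  have hq1 := Set.ncard_le_one_iff_subsingleton.mpr hq
  omega

section Parts

variable {V ι : Type*} {G : SimpleGraph V} {P : ι → Finset V} {S : Set V}

theorem reachable_induce_of_isCycle_support [DecidableEq V] {A : Finset V}
    (hA : ∃ (v : V) (c : G.Walk v v), c.IsCycle ∧ c.support.toFinset = A)
    (hS : {x | x ∈ A ∧ x ∉ S}.Subsingleton) {y z : V} (hy : y ∈ A) (hz : z ∈ A)
    (hyS : y ∈ S) (hzS : z ∈ S) :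
    (G.induce S).Reachable ⟨y, hyS⟩ ⟨z, hzS⟩ := by
  obtain ⟨v, c, hc, rfl⟩ := hA
  simp only [List.mem_toFinset] at hS hy hz
  exact hc.reachable_induce hS hy hz hyS hzS

theorem reachable_induce_of_forall_mem_part_mem [DecidableEq V]
    (hcyc : ∀ i, ∃ (v : V) (c : G.Walk v v), c.IsCycle ∧ c.support.toFinset = P i)
    (hmatch : ∀ i j, i ≠ j → ∃ f : {x // x ∈ P i} ≃ {x // x ∈ P j}, ∀ x, G.Adj x.1 (f x).1)
    {i₀ i : ι} (hi₀ : ∀ x ∈ P i₀, x ∈ S) {a b : V} (ha : a ∈ P i) (haS : a ∈ S)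
    (hb : b ∈ P i₀) :
    (G.induce S).Reachable ⟨a, haS⟩ ⟨b, hi₀ b hb⟩ := by
  have hsub : {x | x ∈ P i₀ ∧ x ∉ S}.Subsingleton := fun x hx => (hx.2 (hi₀ x hx.1)).elim
  rcases eq_or_ne i i₀ with rfl | hi
  · exact reachable_induce_of_isCycle_support (hcyc i) hsub ha hb haS _
  obtain ⟨f, hf⟩ := hmatch i i₀ hi
  have hfa := (f ⟨a, ha⟩).2
  exact (show (G.induce S).Adj ⟨a, haS⟩ ⟨f ⟨a, ha⟩, hi₀ _ hfa⟩ from hf ⟨a, ha⟩).reachable.trans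
    (reachable_induce_of_isCycle_support (hcyc i₀) hsub hfa hb _ _)

theorem reachable_induce_of_subsingleton_parts [DecidableEq V]
    (hcyc : ∀ i, ∃ (v : V) (c : G.Walk v v), c.IsCycle ∧ c.support.toFinset = P i)
    (hmatch : ∀ i j, i ≠ j → ∃ f : {x // x ∈ P i} ≃ {x // x ∈ P j}, ∀ x, G.Adj x.1 (f x).1)
    (hthree : ∀ i, 2 < (P i).card) (hS : ∀ i, {x | x ∈ P i ∧ x ∉ S}.Subsingleton)
    {i j : ι} {a b : V} (ha : a ∈ P i) (hb : b ∈ P j) (haS : a ∈ S) (hbS : b ∈ S) :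
    (G.induce S).Reachable ⟨a, haS⟩ ⟨b, hbS⟩ := by
  rcases eq_or_ne i j with rfl | hij
  · exact reachable_induce_of_isCycle_support (hcyc i) (hS i) ha hb haS hbS
  obtain ⟨f, hf⟩ := hmatch i j hij
  -- at most one vertex of `P i` is deleted, and at most one is matched to a deleted vertex
  obtain ⟨x, hxS, hfxS⟩ : ∃ x : {x // x ∈ P i}, x.1 ∈ S ∧ (f x).1 ∈ S :=
    exists_and_of_subsingleton_setOf_not (by simpa using hthree i)
      ((hS i).preimage Subtype.val_injective |>.anti fun x hx => ⟨x.2, hx⟩)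
      ((hS j).preimage (Subtype.val_injective.comp f.injective) |>.anti
        fun x hx => ⟨(f x).2, hx⟩)
  exact ((reachable_induce_of_isCycle_support (hcyc i) (hS i) ha x.2 haS hxS).trans
    (show (G.induce S).Adj ⟨x, hxS⟩ ⟨f x, hfxS⟩ from hf x).reachable).trans
    (reachable_induce_of_isCycle_support (hcyc j) (hS j) (f x).2 hb hfxS hbS)

theorem connected_induce_of_reachable_parts
    (hparts : ∀ i j a b, a ∈ P i → b ∈ P j → ∀ (haS : a ∈ S) (hbS : b ∈ S),
      (G.induce S).Reachable ⟨a, haS⟩ ⟨b, hbS⟩)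
    (hne : ∃ i, ∃ a ∈ P i, a ∈ S)
    (hout : ∀ u ∈ S, (∀ i, u ∉ P i) → ∃ i, ∃ w ∈ P i, w ∈ S ∧ G.Adj u w) :
    (G.induce S).Connected := by
  obtain ⟨i₀, a₀, ha₀, ha₀S⟩ := hne
  refine (connected_iff_exists_forall_reachable _).mpr ⟨⟨a₀, ha₀S⟩, fun ⟨u, huS⟩ => ?_⟩
  by_cases hu : ∃ i, u ∈ P i
  · obtain ⟨i, hi⟩ := hu
    exact hparts i₀ i a₀ u ha₀ hi ha₀S huS
  · push Not at hu
    obtain ⟨i, w, hw, hwS, huw⟩ := hout u huS hu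
    exact (hparts i₀ i a₀ w ha₀ hw ha₀S hwS).trans
      (show (G.induce S).Adj ⟨w, hwS⟩ ⟨u, huS⟩ from huw.symm).reachable

theorem card_inter_le_one_of_forall_inter_nonempty [Fintype ι] [DecidableEq V]
    (hdisj : Pairwise (Disjoint on P)) {s : Finset V} (hs : s.card ≤ Fintype.card ι)
    (hne : ∀ i, (P i ∩ s).Nonempty) (i : ι) : (P i ∩ s).card ≤ 1 := by
  by_contra! hi
  have hsum : ∑ j, (P j ∩ s).card ≤ s.card := by
    rw [← card_biUnion fun j _ l _ hjl => (hdisj hjl).mono inter_subset_left inter_subset_left]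
    exact card_le_card (biUnion_subset.mpr fun j _ => inter_subset_right)
  have hlt : ∑ _j : ι, 1 < ∑ j, (P j ∩ s).card :=
    sum_lt_sum (fun j _ => (hne j).card_pos) ⟨i, mem_univ i, hi⟩
  simp only [sum_const, card_univ, smul_eq_mul, mul_one] at hlt
  omega

theorem connected_induce_compl [Fintype V] [DecidableEq V] [Fintype ι]
    (hdisj : Pairwise (Disjoint on P)) (hthree : ∀ i, 2 < (P i).card)
    (hcyc : ∀ i, ∃ (v : V) (c : G.Walk v v), c.IsCycle ∧ c.support.toFinset = P i)
    (hmatch : ∀ i j, i ≠ j → ∃ f : {x // x ∈ P i} ≃ {x // x ∈ P j}, ∀ x, G.Adj x.1 (f x).1)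
    {s : Finset V} (hs : s.card ≤ Fintype.card ι) (hne : ∃ i, ∃ a ∈ P i, a ∉ s)
    (hout : ∀ u ∉ s, (∀ i, u ∉ P i) → ∃ i, ∃ w ∈ P i, w ∉ s ∧ G.Adj u w) :
    (G.induce (↑sᶜ : Set V)).Connected := by
  have hmem : ∀ x, x ∈ (↑sᶜ : Set V) ↔ x ∉ s := by simp
  refine connected_induce_of_reachable_parts (fun i j a b ha hb haS hbS => ?_)
    (by simpa only [hmem] using hne) (by simpa only [hmem] using hout)
  by_cases hfree : ∃ i₀, Disjoint (P i₀) s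
  · obtain ⟨i₀, hi₀⟩ := hfree
    have hi₀S : ∀ x ∈ P i₀, x ∈ (↑sᶜ : Set V) := fun x hx => (hmem x).mpr (disjoint_left.mp hi₀ hx)
    obtain ⟨c, hc⟩ : (P i₀).Nonempty := card_pos.mp (by have := hthree i₀; omega)
    exact (reachable_induce_of_forall_mem_part_mem hcyc hmatch hi₀S ha haS hc).trans
      (reachable_induce_of_forall_mem_part_mem hcyc hmatch hi₀S hb hbS hc).symm
  · push Not at hfree
    refine reachable_induce_of_subsingleton_parts hcyc hmatch hthree (fun l x hx y hy => ?_)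
      ha hb haS hbS
    exact card_le_one_iff.mp (card_inter_le_one_of_forall_inter_nonempty hdisj hs
      (fun l => not_disjoint_iff_nonempty_inter.mp (hfree l)) l)
      (mem_inter.mpr ⟨hx.1, by simpa using hx.2⟩) (mem_inter.mpr ⟨hy.1, by simpa using hy.2⟩)

end Parts

theorem cycles_plus_matchings_k_connected_general
    {V : Type*} [Fintype V] [DecidableEq V] (k t : ℕ) (hk : 2 ≤ k)
    (ht3 : 3 ≤ t)
    (G : SimpleGraph V) (P : Fin (k - 1) → Finset V)
    (hdisj : ∀ i j, i ≠ j → Disjoint (P i) (P j))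
    (hcard : ∀ i, (P i).card = t)
    (hHam : ∀ i, ∃ (v : V) (c : G.Walk v v), c.IsCycle ∧ c.support.toFinset = P i)
    (hPM : ∀ i j, i ≠ j → ∃ f : {x // x ∈ P i} ≃ {x // x ∈ P j},
      ∀ x, G.Adj x.1 (f x).1)
    (hU : ∀ u : V, (∀ i, u ∉ P i) →
      ∃ s : Finset V, s.card = k ∧ ∀ w ∈ s, (∃ i, w ∈ P i) ∧ G.Adj u w) :
    IsKVertexConnected G k := by
  have hunion : (univ.biUnion P).card = (k - 1) * t := by
    rw [card_biUnion fun i _ j _ hij => hdisj i j hij]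
    simp [hcard, mul_comm]
  have hk_lt : k < (k - 1) * t :=
    calc k < (k - 1) * 3 := by omega
      _ ≤ (k - 1) * t := Nat.mul_le_mul_left _ ht3
  refine ⟨hk_lt.trans_le (hunion ▸ card_le_univ _), fun s hs => ?_⟩
  refine connected_induce_compl (fun i j hij => hdisj i j hij) (fun i => hcard i ▸ ht3) hHam hPM
    (by simp only [Fintype.card_fin]; omega) ?_ fun u _ hu => ?_
  · obtain ⟨a, ha, has⟩ := exists_mem_notMem_of_card_lt_card (hunion ▸ hs.trans hk_lt)
    obtain ⟨i, -, hai⟩ := mem_biUnion.mp ha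
    exact ⟨i, a, hai, has⟩
  · obtain ⟨N, hNcard, hN⟩ := hU u hu
    obtain ⟨w, hwN, hws⟩ := exists_mem_notMem_of_card_lt_card (hNcard ▸ hs)
    obtain ⟨⟨i, hwi⟩, huw⟩ := hN w hwN
    exact ⟨i, w, hwi, hws, huw⟩

theorem cycles_plus_matchings_k_connected
    {V : Type*} [Fintype V] [DecidableEq V] (n k t r : ℕ) (hk : 2 ≤ k)
    (hn : Fintype.card V = n) (ht : t = n / (k - 1)) (hkt : k ≤ t) (ht3 : 3 ≤ t)
    (hr : r = n - (k - 1) * t) (hrk : r < k - 1)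
    (G : SimpleGraph V) (P : Fin (k - 1) → Finset V)
    (hdisj : ∀ i j, i ≠ j → Disjoint (P i) (P j))
    (hcard : ∀ i, (P i).card = t)
    (hHam : ∀ i, ∃ (v : V) (c : G.Walk v v), c.IsCycle ∧ c.support.toFinset = P i)
    (hPM : ∀ i j, i ≠ j → ∃ f : {x // x ∈ P i} ≃ {x // x ∈ P j},
      ∀ x, G.Adj x.1 (f x).1)
    (hU : ∀ u : V, (∀ i, u ∉ P i) →
      ∃ s : Finset V, s.card = k ∧ ∀ w ∈ s, (∃ i, w ∈ P i) ∧ G.Adj u w) :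
    IsKVertexConnected G k :=
  cycles_plus_matchings_k_connected_general k t hk ht3 G P hdisj hcard hHam hPM hU
end

section
/- Let X be a hypergeometrically distributed random variable HG(N, K, n) with mean μ = nK/N. Then for every a > 0, P(X < (1-a)μ) < exp(-a²μ/2), and for every 0 < a < 1, P(X > (1+a)μ) < exp(-a²μ/3). -/
/-! With weights `w i = z` on `S` and `w i = 1` off `S`, the generating function
`∑ s, z ^ #(s ∩ S)` over the `n`-subsets is the elementary symmetric polynomial `eₙ(w)`.
Maclaurin's inequality `eₙ(w) ≤ C(N, n) · mean(w) ^ n`, proved by adding one weight at a time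
and applying AM–GM, dominates it by the binomial generating function
`C(N, n) (1 + K/N (z - 1)) ^ n`, hence by `C(N, n) exp (μ (z - 1))`. From there the argument is
the usual Chernoff bound for sums of independent indicators: Markov's inequality at `z = 1 ∓ a`,
and the elementary estimates of `(1 ∓ a) log (1 ∓ a)`. -/

open Finset Real

theorem pow_mul_le_add_div_pow {x y : ℝ} (hx : 0 ≤ x) (hy : 0 ≤ y) (n : ℕ) :
    x ^ n * y ≤ ((n * x + y) / (n + 1)) ^ (n + 1) := by
  have hn : (0 : ℝ) < n + 1 := by positivity
  have amgm := geom_mean_le_arith_mean2_weighted (w₁ := n / (n + 1)) (w₂ := 1 / (n + 1))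
    (p₁ := x) (p₂ := y) (by positivity) (by positivity) hx hy (by field_simp)
  calc x ^ n * y = (x ^ ((n : ℝ) / (n + 1)) * y ^ (1 / ((n : ℝ) + 1))) ^ (n + 1) := by
        rw [mul_pow, ← rpow_mul_natCast hx, ← rpow_mul_natCast hy]
        push_cast
        rw [div_mul_cancel₀ _ hn.ne', div_mul_cancel₀ _ hn.ne', rpow_one, rpow_natCast]
    _ ≤ ((n * x + y) / (n + 1)) ^ (n + 1) := by
        gcongr
        exact amgm.trans_eq (by ring)

theorem choose_mul_pow_add_le (N n : ℕ) {m a : ℝ} (hm : 0 ≤ m) (ha : 0 ≤ a) :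
    N.choose (n + 1) * m ^ (n + 1) + a * (N.choose n * m ^ n) ≤
      (N + 1).choose (n + 1) * ((N * m + a) / (N + 1)) ^ (n + 1) := by
  rcases lt_or_ge N n with hNn | hnN
  · simp [Nat.choose_eq_zero_of_lt hNn, Nat.choose_eq_zero_of_lt (by omega : N < n + 1),
      Nat.choose_eq_zero_of_lt (by omega : N + 1 < n + 1)]
  have hN : (0 : ℝ) < N + 1 := by positivity
  set D := ((N - n) * m + (n + 1) * a) / (N + 1)
  have hD : 0 ≤ D := by
    have : (n : ℝ) ≤ N := by exact_mod_cast hnN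
    have : 0 ≤ (N : ℝ) - n := by linarith
    positivity
  have hchoose₁ : (N.choose (n + 1) : ℝ) * (N + 1) = (N + 1).choose (n + 1) * (N - n) := by
    rw [← Nat.cast_sub hnN, ← Nat.add_sub_add_right N 1 n]
    exact_mod_cast Nat.choose_mul_succ_eq N (n + 1)
  have hchoose₂ : (N.choose n : ℝ) * (N + 1) = (N + 1).choose (n + 1) * (n + 1) := by
    rw [mul_comm]
    exact_mod_cast Nat.add_one_mul_choose_eq N n
  have hND : (N + 1) * D = (N - n) * m + (n + 1) * a := mul_div_cancel₀ _ hN.ne'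
  have hmean : (n * m + D) / (n + 1) = (N * m + a) / (N + 1) := by
    rw [div_eq_div_iff (by positivity) hN.ne']
    linear_combination hND
  calc (N.choose (n + 1) : ℝ) * m ^ (n + 1) + a * (N.choose n * m ^ n)
      = (N + 1).choose (n + 1) * (m ^ n * D) := by
        apply mul_right_cancel₀ hN.ne'
        linear_combination m ^ (n + 1) * hchoose₁ + a * m ^ n * hchoose₂ -
          ((N + 1).choose (n + 1) : ℝ) * m ^ n * hND
    _ ≤ (N + 1).choose (n + 1) * ((N * m + a) / (N + 1)) ^ (n + 1) := by
        rw [← hmean]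
        gcongr
        exact pow_mul_le_add_div_pow hm hD n

theorem Multiset.esymm_cons_succ {R : Type*} [CommSemiring R] (a : R) (s : Multiset R) (n : ℕ) :
    (a ::ₘ s).esymm (n + 1) = s.esymm (n + 1) + a * s.esymm n := by
  simp [Multiset.esymm, Multiset.powersetCard_cons, Multiset.map_map, Multiset.sum_map_mul_left]

theorem Multiset.esymm_le_choose_mul_pow (s : Multiset ℝ) (hs : ∀ x ∈ s, 0 ≤ x) (n : ℕ) :
    s.esymm n ≤ (card s).choose n * (s.sum / card s) ^ n := by
  induction s using Multiset.induction_on generalizing n with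
  | empty => cases n <;> simp [Multiset.esymm, Multiset.powersetCard_zero_right]
  | cons a s ih =>
    have ha : 0 ≤ a := hs a (Multiset.mem_cons_self a s)
    have hs' : ∀ x ∈ s, 0 ≤ x := fun x hx => hs x (Multiset.mem_cons_of_mem hx)
    cases n with
    | zero => simp [Multiset.esymm]
    | succ n =>
      have hm : 0 ≤ s.sum / card s := by
        have := Multiset.sum_nonneg hs'
        positivity
      have hsum : (card s : ℝ) * (s.sum / card s) = s.sum :=
        mul_div_cancel_of_imp' fun h => by simp_all
      calc (a ::ₘ s).esymm (n + 1)
          = s.esymm (n + 1) + a * s.esymm n := Multiset.esymm_cons_succ a s n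
        _ ≤ (card s).choose (n + 1) * (s.sum / card s) ^ (n + 1) +
              a * ((card s).choose n * (s.sum / card s) ^ n) := by
          gcongr
          · exact ih hs' _
          · exact ih hs' n
        _ ≤ (card s + 1).choose (n + 1) *
              ((card s * (s.sum / card s) + a) / (card s + 1)) ^ (n + 1) :=
          choose_mul_pow_add_le _ _ hm ha
        _ = (card (a ::ₘ s)).choose (n + 1) * ((a ::ₘ s).sum / card (a ::ₘ s)) ^ (n + 1) := by
          rw [hsum]
          simp [add_comm]

theorem sum_powersetCard_pow_card_inter_le {α : Type*} [Fintype α] [DecidableEq α]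
    (S : Finset α) (n : ℕ) {z : ℝ} (hz : 0 ≤ z) :
    ∑ s ∈ powersetCard n univ, z ^ #(s ∩ S) ≤
      (Fintype.card α).choose n * exp (n * (#S / Fintype.card α * (z - 1))) := by
  set w : α → ℝ := fun i => if i ∈ S then z else 1
  have hw : ∀ i, 0 ≤ w i := fun i => by positivity
  have hsum : ∑ i, w i = Fintype.card α + #S * (z - 1) := by
    have hw₁ : ∀ i, w i = 1 + if i ∈ S then z - 1 else 0 := fun i => by
      simp only [w]; split_ifs <;> ring
    simp [hw₁, sum_add_distrib, sum_ite_mem, mul_sub_one]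
  have hmean : (∑ i, w i) / Fintype.card α ≤ exp (#S / Fintype.card α * (z - 1)) := by
    rcases eq_or_ne (Fintype.card α : ℝ) 0 with h | h
    · rw [h, div_zero]; exact (exp_pos _).le
    · rw [hsum, add_div, div_self h, ← mul_div_right_comm, add_comm]
      exact add_one_le_exp _
  have hmaclaurin := (univ.val.map w).esymm_le_choose_mul_pow (by simpa using fun i => hw i) n
  rw [Finset.esymm_map_val] at hmaclaurin
  calc ∑ s ∈ powersetCard n univ, z ^ #(s ∩ S)
        = ∑ s ∈ powersetCard n univ, ∏ i ∈ s, w i := by simp [w, prod_ite_mem]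
    _ ≤ (Fintype.card α).choose n * ((∑ i, w i) / Fintype.card α) ^ n := by
        simpa using hmaclaurin
    _ ≤ (Fintype.card α).choose n * exp (n * (#S / Fintype.card α * (z - 1))) := by
        rw [exp_nat_mul]
        gcongr

theorem neg_sub_mul_log_one_sub_le {a : ℝ} (ha0 : 0 ≤ a) (ha1 : a < 1) :
    -a - (1 - a) * log (1 - a) ≤ -(a ^ 2 / 2) := by
  have hpos : 0 < 1 - a := by linarith
  have hsinh := self_le_sinh_iff.2 (neg_nonneg.2 (log_nonpos hpos.le (by linarith)))
  rw [sinh_eq, neg_neg, exp_neg, exp_log hpos] at hsinh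
  have := mul_le_mul_of_nonneg_left hsinh hpos.le
  field_simp at this
  linear_combination this / 2

theorem sub_mul_log_one_add_le {a : ℝ} (ha0 : 0 ≤ a) (ha1 : a ≤ 1) :
    a - (1 + a) * log (1 + a) ≤ -(a ^ 2 / 3) := by
  have hlog := mul_le_mul_of_nonneg_left (le_log_one_add_of_nonneg ha0) (by linarith : 0 ≤ 1 + a)
  have hdiv : a - (1 + a) * (2 * a / (a + 2)) = -(a ^ 2 / (a + 2)) := by
    field_simp; ring
  have hsq : a ^ 2 / 3 ≤ a ^ 2 / (a + 2) := by
    gcongr; linarith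
  linarith

theorem card_filter_div_card_lt_exp {ι : Type*} (P : Finset ι) (p : ι → Prop) [DecidablePred p]
    (X : ι → ℝ) {l t b : ℝ} (hp : ∀ s ∈ P, p s → l * t < l * X s)
    (hmgf : ∑ s ∈ P, exp (l * X s) ≤ #P * exp b) :
    (#(P.filter p) : ℝ) / #P < exp (b - l * t) := by
  rcases (P.filter p).eq_empty_or_nonempty with hF | hF
  · simpa [hF] using exp_pos _
  have hP : (0 : ℝ) < #P := by exact_mod_cast (hF.mono (filter_subset p P)).card_pos
  suffices #(P.filter p) * exp (l * t) < #P * exp b by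
    rw [div_lt_iff₀ hP, exp_sub, div_mul_eq_mul_div, lt_div_iff₀ (exp_pos _)]
    linarith
  calc #(P.filter p) * exp (l * t) = ∑ s ∈ P.filter p, exp (l * t) := by
        rw [sum_const, nsmul_eq_mul]
    _ < ∑ s ∈ P.filter p, exp (l * X s) := by
        refine sum_lt_sum_of_nonempty hF fun s hs => exp_lt_exp.2 ?_
        rw [mem_filter] at hs
        exact hp s hs.1 hs.2
    _ ≤ ∑ s ∈ P, exp (l * X s) :=
        sum_le_sum_of_subset_of_nonneg (filter_subset p P) fun _ _ _ => (exp_pos _).le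
    _ ≤ #P * exp b := hmgf

theorem hypergeometric_tail_lt {α : Type*} [Fintype α] [DecidableEq α] (S : Finset α) (n : ℕ)
    (p : Finset α → Prop) [DecidablePred p] {l t : ℝ} (hp : ∀ s, p s → l * t < l * #(s ∩ S)) :
    (#((powersetCard n (univ : Finset α)).filter p) : ℝ) /
        #(powersetCard n (univ : Finset α)) <
      exp (n * (#S / Fintype.card α * (exp l - 1)) - l * t) := by
  refine card_filter_div_card_lt_exp _ p _ (fun s _ => hp s) ?_
  rw [card_powersetCard, card_univ]
  convert sum_powersetCard_pow_card_inter_le S n (exp_pos l).le using 3 with s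
  rw [mul_comm, exp_nat_mul]

theorem hypergeometric_chernoff_general (N K n : ℕ)
    (S : Finset (Fin N)) (hS : S.card = K) (μ : ℝ) (hμ : μ = n * K / N) :
    (∀ a : ℝ, 0 < a →
      (((Finset.powersetCard n (Finset.univ : Finset (Fin N))).filter
          fun s => ((s ∩ S).card : ℝ) < (1 - a) * μ).card : ℝ) /
        ((Finset.powersetCard n (Finset.univ : Finset (Fin N))).card : ℝ)
        < Real.exp (-(a ^ 2 * μ / 2))) ∧
    (∀ a : ℝ, 0 < a → a < 1 →
      (((Finset.powersetCard n (Finset.univ : Finset (Fin N))).filter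
          fun s => (1 + a) * μ < ((s ∩ S).card : ℝ)).card : ℝ) /
        ((Finset.powersetCard n (Finset.univ : Finset (Fin N))).card : ℝ)
        < Real.exp (-(a ^ 2 * μ / 3))) := by
  have hμ0 : 0 ≤ μ := by rw [hμ]; positivity
  have hmean : (n : ℝ) * (#S / Fintype.card (Fin N)) = μ := by
    rw [hμ, hS, Fintype.card_fin]; ring
  constructor
  · intro a ha
    rcases lt_or_ge a 1 with ha1 | ha1
    · have hlog : log (1 - a) < 0 := log_neg (by linarith) (by linarith)
      refine (hypergeometric_tail_lt S n _ (l := log (1 - a)) (t := (1 - a) * μ)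
        fun s hs => mul_lt_mul_of_neg_left hs hlog).trans_le ?_
      rw [exp_le_exp, exp_log (by linarith), ← mul_assoc, hmean]
      linear_combination mul_le_mul_of_nonneg_right (neg_sub_mul_log_one_sub_le ha.le ha1) hμ0
    · have hthreshold : (1 - a) * μ ≤ 0 := mul_nonpos_of_nonpos_of_nonneg (by linarith) hμ0
      rw [filter_false_of_mem fun s _ => not_lt.2 (hthreshold.trans (Nat.cast_nonneg _)),
        card_empty, Nat.cast_zero, zero_div]
      exact exp_pos _
  · intro a ha ha1
    refine (hypergeometric_tail_lt S n _ (l := log (1 + a)) (t := (1 + a) * μ)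
      fun s hs => mul_lt_mul_of_pos_left hs (log_pos (by linarith))).trans_le ?_
    rw [exp_le_exp, exp_log (by linarith), ← mul_assoc, hmean]
    linear_combination mul_le_mul_of_nonneg_right (sub_mul_log_one_add_le ha.le ha1.le) hμ0

/-- Chernoff-type bounds for the hypergeometric distribution `HG(N, K, n)`, modelled as the
uniform distribution over `n`-element subsets of an `N`-element population in which a fixed
`K`-element subset `S` marks the successes. -/
theorem hypergeometric_chernoff (N K n : ℕ) (hK : K ≤ N) (hn : n ≤ N)
    (S : Finset (Fin N)) (hS : S.card = K) (μ : ℝ) (hμ : μ = n * K / N) :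
    (∀ a : ℝ, 0 < a →
      (((Finset.powersetCard n (Finset.univ : Finset (Fin N))).filter
          fun s => ((s ∩ S).card : ℝ) < (1 - a) * μ).card : ℝ) /
        ((Finset.powersetCard n (Finset.univ : Finset (Fin N))).card : ℝ)
        < Real.exp (-(a ^ 2 * μ / 2))) ∧
    (∀ a : ℝ, 0 < a → a < 1 →
      (((Finset.powersetCard n (Finset.univ : Finset (Fin N))).filter
          fun s => (1 + a) * μ < ((s ∩ S).card : ℝ)).card : ℝ) /
        ((Finset.powersetCard n (Finset.univ : Finset (Fin N))).card : ℝ)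
        < Real.exp (-(a ^ 2 * μ / 3))) :=
  hypergeometric_chernoff_general N K n S hS μ hμ
end

section
/- Let k ≥ 1 be an integer and let δ < (12ke)^{-6} be a positive constant. Then the sum over a from 5 to ⌊δn⌋ of binom(n, a)·binom(n - a, 2ka - 1)·(12ka/n)^{4ka} tends to 0 as n → ∞. -/
/-!
Since `binom(n, a) ≤ (en/a)^a`, the `a`-th summand is at most `((12ke)^4 a/n)^(ka)`. For fixed
`a` this tends to `0`, and for `a ≤ δn` it is at most `r^a` with `r = ((12ke)^4 δ)^k < 1`, so
dominated convergence for series (Tannery's theorem) shows that the sum tends to `0`.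
-/

open Filter Topology

theorem tendsto_finset_sum_of_dominated_convergence {α β G : Type*} {𝓕 : Filter α}
    [NormedAddCommGroup G] [CompleteSpace G] {f : α → β → G} {s : α → Finset β}
    {bound : β → ℝ} (h_sum : Summable bound)
    (h_lim : ∀ b, Tendsto (f · b) (𝓕 ⊓ 𝓟 {n | b ∈ s n}) (𝓝 0))
    (h_bound : ∀ n, ∀ b ∈ s n, ‖f n b‖ ≤ bound b) :
    Tendsto (fun n ↦ ∑ b ∈ s n, f n b) 𝓕 (𝓝 0) := by
  rw [show (fun n ↦ ∑ b ∈ s n, f n b) = fun n ↦ ∑' b, (s n : Set β).indicator (f n) b from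
    funext fun n ↦ sum_eq_tsum_indicator _ _]
  have h_lim' (b : β) : Tendsto (fun n ↦ (s n : Set β).indicator (f n) b) 𝓕 (𝓝 0) := by
    classical
    unfold Set.indicator
    convert (h_lim b).if tendsto_const_nhds using 3
    exact Finset.mem_coe
  have h_bound' (n : α) (b : β) : ‖(s n : Set β).indicator (f n) b‖ ≤ |bound b| := by
    by_cases hb : b ∈ s n
    · simpa [hb] using (h_bound n b hb).trans (le_abs_self _)
    · simp [hb]
  simpa using tendsto_tsum_of_dominated_convergence h_sum.abs h_lim' (.of_forall h_bound')

namespace Nat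

theorem choose_le_exp_mul_div_pow (n a : ℕ) :
    (n.choose a : ℝ) ≤ (Real.exp 1 * n / a) ^ a := by
  have h_fact : (a : ℝ) ^ a / a ! ≤ Real.exp 1 ^ a := by
    simpa [← Real.exp_nat_mul] using Real.pow_div_factorial_le_exp _ (Nat.cast_nonneg a) a
  calc (n.choose a : ℝ) ≤ (n : ℝ) ^ a / a ! := choose_le_pow_div a n
    _ = ((n : ℝ) / a) ^ a * ((a : ℝ) ^ a / a !) := by
      rcases a.eq_zero_or_pos with rfl | ha
      · simp
      · rw [div_pow]; field_simp
    _ ≤ ((n : ℝ) / a) ^ a * Real.exp 1 ^ a := by gcongr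
    _ = (Real.exp 1 * n / a) ^ a := by rw [← mul_pow]; ring

theorem choose_le_exp_mul_div_pow_of_le {n a m : ℕ} (ha : 0 < a) (ham : a ≤ m) :
    (n.choose m : ℝ) ≤ (Real.exp 1 * n / a) ^ m :=
  (choose_le_exp_mul_div_pow n m).trans <| by gcongr

end Nat

theorem choose_mul_choose_sub_le {k n a : ℕ} (hk : 1 ≤ k) (ha : 1 ≤ a) (han : a ≤ n) :
    (n.choose a : ℝ) * ((n - a).choose (2 * k * a - 1) : ℝ) ≤
      (Real.exp 1 * n / a) ^ (3 * k * a) := by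
  have h_base : 1 ≤ Real.exp 1 * n / a := by
    rw [one_le_div (by positivity)]
    calc (a : ℝ) ≤ 1 * n := by rw [one_mul]; exact_mod_cast han
      _ ≤ Real.exp 1 * n := by gcongr; exact Real.one_le_exp zero_le_one
  have h_ka : a ≤ k * a := Nat.le_mul_of_pos_left a hk
  calc (n.choose a : ℝ) * ((n - a).choose (2 * k * a - 1) : ℝ)
      ≤ (Real.exp 1 * n / a) ^ a * (Real.exp 1 * n / a) ^ (2 * k * a - 1) := by
        gcongr
        · exact Nat.choose_le_exp_mul_div_pow n a
        · calc ((n - a).choose (2 * k * a - 1) : ℝ) ≤ n.choose (2 * k * a - 1) := by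
                exact_mod_cast Nat.choose_le_choose _ (Nat.sub_le n a)
            _ ≤ _ := Nat.choose_le_exp_mul_div_pow_of_le ha (by rw [mul_assoc]; omega)
    _ = (Real.exp 1 * n / a) ^ (a + (2 * k * a - 1)) := (pow_add _ _ _).symm
    _ ≤ (Real.exp 1 * n / a) ^ (3 * k * a) :=
        pow_le_pow_right₀ h_base (by rw [mul_assoc, mul_assoc]; omega)

noncomputable def unionBoundSummand (k n a : ℕ) : ℝ :=
  (n.choose a : ℝ) * ((n - a).choose (2 * k * a - 1) : ℝ) * (12 * k * a / (n : ℝ)) ^ (4 * k * a)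

theorem unionBoundSummand_nonneg (k n a : ℕ) : 0 ≤ unionBoundSummand k n a := by
  unfold unionBoundSummand
  positivity

theorem unionBoundSummand_le {k n a : ℕ} (hk : 1 ≤ k) (ha : 1 ≤ a) (han : a ≤ n) :
    unionBoundSummand k n a ≤ ((12 * k * Real.exp 1) ^ 4 * (a / n)) ^ (k * a) := by
  calc unionBoundSummand k n a
      ≤ (Real.exp 1 * n / a) ^ (3 * k * a) * (12 * k * a / (n : ℝ)) ^ (4 * k * a) := by
        unfold unionBoundSummand
        gcongr
        exact choose_mul_choose_sub_le hk ha han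
    _ = (Real.exp 1 ^ 3 * (12 * k) ^ 4 * (a / n)) ^ (k * a) := by
        rw [mul_assoc 3, mul_assoc 4, pow_mul _ 3, pow_mul _ 4, ← mul_pow]
        congr 1
        field_simp
    _ ≤ ((12 * k * Real.exp 1) ^ 4 * (a / n)) ^ (k * a) := by
        gcongr
        calc Real.exp 1 ^ 3 * (12 * k) ^ 4 ≤ Real.exp 1 ^ 4 * (12 * k) ^ 4 := by
              gcongr
              · exact Real.one_le_exp zero_le_one
              · norm_num
          _ = (12 * k * Real.exp 1) ^ 4 := by ring

theorem tendsto_unionBoundSummand {k a : ℕ} (hk : 1 ≤ k) (ha : 1 ≤ a) :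
    Tendsto (fun n ↦ unionBoundSummand k n a) atTop (𝓝 0) := by
  have h_bound : Tendsto (fun n : ℕ ↦ ((12 * k * Real.exp 1) ^ 4 * (a / n)) ^ (k * a))
      atTop (𝓝 0) := by
    simpa [zero_pow (by positivity : k * a ≠ 0)] using
      ((tendsto_const_div_atTop_nhds_zero_nat (a : ℝ)).const_mul _).pow (k * a)
  refine squeeze_zero' (.of_forall fun n ↦ unionBoundSummand_nonneg k n a) ?_ h_bound
  filter_upwards [eventually_ge_atTop a] with n han
  exact unionBoundSummand_le hk ha han

theorem unionBoundSummand_le_geometric {k n a : ℕ} {δ : ℝ} (hk : 1 ≤ k) (hδ : δ ≤ 1)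
    (ha : a ∈ Finset.Icc 5 ⌊δ * n⌋₊) :
    unionBoundSummand k n a ≤ (((12 * k * Real.exp 1) ^ 4 * δ) ^ k) ^ a := by
  rw [Finset.mem_Icc] at ha
  have haδ : (a : ℝ) ≤ δ * n := (Nat.le_floor_iff' (by omega)).1 ha.2
  have han : a ≤ n := by
    exact_mod_cast haδ.trans (mul_le_of_le_one_left (Nat.cast_nonneg n) hδ)
  have hn : (0 : ℝ) < n := by exact_mod_cast (show 0 < n by omega)
  rw [← pow_mul]
  calc unionBoundSummand k n a ≤ ((12 * k * Real.exp 1) ^ 4 * (a / n)) ^ (k * a) :=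
        unionBoundSummand_le hk (by omega) han
    _ ≤ ((12 * k * Real.exp 1) ^ 4 * δ) ^ (k * a) := by
        gcongr
        rwa [div_le_iff₀ hn]

theorem expander_union_bound_sum (k : ℕ) (hk : 1 ≤ k) (δ : ℝ) (hδ : 0 < δ)
    (hδ2 : δ < (12 * k * Real.exp 1) ^ (-(6 : ℝ))) :
    Tendsto (fun n : ℕ =>
        ∑ a ∈ Finset.Icc 5 ⌊δ * n⌋₊,
          (n.choose a : ℝ) * ((n - a).choose (2 * k * a - 1) : ℝ) *
            (12 * k * a / (n : ℝ)) ^ (4 * k * a))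
      atTop (nhds 0) := by
  show Tendsto (fun n : ℕ ↦ ∑ a ∈ Finset.Icc 5 ⌊δ * n⌋₊, unionBoundSummand k n a) atTop (𝓝 0)
  set K := 12 * k * Real.exp 1
  have hK : 1 < K := one_lt_mul_of_le_of_lt (by norm_cast; omega) (Real.one_lt_exp_iff.2 one_pos)
  rw [Real.rpow_neg (by positivity)] at hδ2
  norm_cast at hδ2
  have hKδ : K ^ 4 * δ < 1 :=
    calc K ^ 4 * δ ≤ K ^ 6 * δ := by gcongr <;> [exact hK.le; norm_num]
      _ < K ^ 6 * (K ^ 6)⁻¹ := by gcongr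
      _ = 1 := mul_inv_cancel₀ (by positivity)
  have hδ1 : δ ≤ 1 := (le_mul_of_one_le_left hδ.le (one_le_pow₀ hK.le)).trans hKδ.le
  refine tendsto_finset_sum_of_dominated_convergence (bound := fun a ↦ ((K ^ 4 * δ) ^ k) ^ a)
    (summable_geometric_of_lt_one (by positivity) (pow_lt_one₀ (by positivity) hKδ (by omega)))
    (fun a ↦ ?_) (fun n a ha ↦ ?_)
  · rcases a.eq_zero_or_pos with rfl | ha
    · simp  -- `0 ∉ Icc 5 _`, so the filter is `⊥`
    · exact (tendsto_unionBoundSummand hk ha).mono_left inf_le_left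
  · rw [Real.norm_of_nonneg (unionBoundSummand_nonneg k n a)]
    exact unionBoundSummand_le_geometric hk hδ1 ha
end

section
/- Suppose a graph G on vertex set V with |V| = n has the property that there is no pair of disjoint vertex sets U, W ⊆ V with |U| = |W| = R and no edge of G between U and W. If additionally G is an (R, 2k)-expander, then G is a ((n+k)/(4k), 2k)-expander, i.e., every set X ⊆ V with |X| ≤ (n+k)/(4k) satisfies |N_G(X)| ≥ 2k|X|. -/
/-!
If `|N(X)| < 2k|X|` for some `X` with `R < |X| ≤ (n+k)/(4k)`, then `X ∪ N(X)` has fewer than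
`(2k+1)|X|` vertices, so at least `R` vertices lie outside it. None of them is adjacent to `X`, so
`R` of them together with `R` vertices of `X` form a pair of disjoint `R`-sets with no edge between
them.
-/

open Finset

section
variable {V : Type*} [Fintype V] [DecidableEq V] (G : SimpleGraph V) [DecidableRel G.Adj]

lemma not_adj_of_mem_compl_union_extNbhd {X : Finset V} {u w : V} (hu : u ∈ X)
    (hw : w ∈ univ \ (X ∪ extNbhd G X)) : ¬ G.Adj u w := by
  intro hadj
  simp only [mem_sdiff, mem_univ, mem_union, not_or, true_and] at hw
  exact hw.2 (mem_filter.2 ⟨mem_univ w, hw.1, u, hu, hadj⟩)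

lemma exists_nonadjacent_pair {X : Finset V} {R : ℕ} (hX : R ≤ #X)
    (hC : R ≤ #(univ \ (X ∪ extNbhd G X))) :
    ∃ U W : Finset V, Disjoint U W ∧ #U = R ∧ #W = R ∧ ∀ u ∈ U, ∀ w ∈ W, ¬ G.Adj u w := by
  obtain ⟨U, hUX, hU⟩ := exists_subset_card_eq hX
  obtain ⟨W, hWC, hW⟩ := exists_subset_card_eq hC
  refine ⟨U, W, disjoint_left.2 fun a haU haW => ?_, hU, hW,
    fun u hu w hw => not_adj_of_mem_compl_union_extNbhd G (hUX hu) (hWC hw)⟩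
  exact (mem_sdiff.1 (hWC haW)).2 (mem_union_left _ (hUX haU))

lemma card_lt_card_add_card_extNbhd_add {R : ℕ}
    (hpair : ¬ ∃ U W : Finset V, Disjoint U W ∧ #U = R ∧ #W = R ∧
      ∀ u ∈ U, ∀ w ∈ W, ¬ G.Adj u w)
    {X : Finset V} (hX : R ≤ #X) : Fintype.card V < #X + #(extNbhd G X) + R := by
  have hC : #(univ \ (X ∪ extNbhd G X)) < R :=
    lt_of_not_ge fun hC => hpair (exists_nonadjacent_pair G hX hC)
  have hcompl := card_sdiff_add_card_eq_card (subset_univ (X ∪ extNbhd G X))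
  have hunion := card_union_le X (extNbhd G X)
  rw [card_univ] at hcompl
  omega

end

lemma two_mul_mul_le_of_lt_add {n k R x N : ℕ} (hx : 4 * k * x ≤ n + k)
    (hR : 4 * k * R ≤ n + k) (hRx : R < x) (hn : n < x + N + R) : 2 * k * x ≤ N := by
  by_contra! hN
  have hk : 0 < k := Nat.pos_of_ne_zero fun h => by simp [h] at hN
  have hkn : k ≤ n := by nlinarith
  have hscaled : 4 * k * (n + 2) ≤ 4 * k * ((2 * k + 1) * x + R) :=
    Nat.mul_le_mul_left _ (by nlinarith)
  -- Together with `4kx ≤ n + k` and `4kR ≤ n + k` this says `2(k-1)(n-k) + 4k ≤ 0`.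
  have hkn' : (k : ℤ) ≤ n := by exact_mod_cast hkn
  zify at *
  nlinarith [mul_nonneg (sub_nonneg.2 (show (1 : ℤ) ≤ k by omega)) (sub_nonneg.2 hkn')]

lemma natCast_le_add_div_iff {m n k : ℕ} (hk : 0 < k) :
    (m : ℝ) ≤ ((n : ℝ) + k) / (4 * k) ↔ 4 * k * m ≤ n + k := by
  rw [le_div_iff₀ (by positivity), mul_comm]
  exact_mod_cast Iff.rfl

theorem expander_upgrade_general
    {V : Type*} [Fintype V] [DecidableEq V] (G : SimpleGraph V) [DecidableRel G.Adj]
    (n k R : ℕ) (hn : Fintype.card V = n)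
    (hR2 : (R : ℝ) ≤ ((n : ℝ) + k) / (4 * k))
    (hpair : ¬ ∃ U W : Finset V, Disjoint U W ∧ U.card = R ∧ W.card = R ∧
      ∀ u ∈ U, ∀ w ∈ W, ¬ G.Adj u w)
    (hexp : ∀ U : Finset V, U.card ≤ R → 2 * k * U.card ≤ (extNbhd G U).card) :
    ∀ X : Finset V, (X.card : ℝ) ≤ ((n : ℝ) + k) / (4 * k) →
      2 * k * X.card ≤ (extNbhd G X).card := by
  intro X hX
  rcases Nat.eq_zero_or_pos k with rfl | hk
  · simp
  rcases le_or_gt X.card R with hXR | hXR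
  · exact hexp X hXR
  rw [natCast_le_add_div_iff hk] at hX hR2
  exact two_mul_mul_le_of_lt_add hX hR2 hXR
    (hn ▸ card_lt_card_add_card_extNbhd_add G hpair hXR.le)

theorem expander_upgrade
    {V : Type*} [Fintype V] [DecidableEq V] (G : SimpleGraph V) [DecidableRel G.Adj]
    (n k R : ℕ) (hn : Fintype.card V = n) (hk : 1 ≤ k) (hR : 0 < R)
    (hR2 : (R : ℝ) ≤ ((n : ℝ) + k) / (4 * k))
    (hpair : ¬ ∃ U W : Finset V, Disjoint U W ∧ U.card = R ∧ W.card = R ∧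
      ∀ u ∈ U, ∀ w ∈ W, ¬ G.Adj u w)
    (hexp : ∀ U : Finset V, U.card ≤ R → 2 * k * U.card ≤ (extNbhd G U).card) :
    ∀ X : Finset V, (X.card : ℝ) ≤ ((n : ℝ) + k) / (4 * k) →
      2 * k * X.card ≤ (extNbhd G X).card :=
  expander_upgrade_general G n k R hn hR2 hpair hexp
end
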